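/- arXiv:1403.5435 — 4 statements merged into one kernel-verified Lean document; each statement's English description precedes it below -/
import Mathlib

section
/- Let h : ℝ → ℝ be continuous with |h(x)| < β|x| for all x ≠ 0, where β > 0. Then there exists a continuous strictly increasing function h̃ : (0,∞) → ℝ such that |h(x)| < h̃(x) < β·x for all x > 0. -/
/-!
Let `M x` be the maximum of `|h|` on `[0, x]`. It is monotone, dominates `|h x|`, and is continuous
because `M x = max_{s ∈ [0, 1]} |h (s x)|` is a maximum of a jointly continuous function over a
fixed compact set. Since `h 0 = 0` and `|h t| < β t ≤ β x` for `0 < t ≤ x`, also `M x < β x`.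
The average `(M x + β x) / 2` then lies strictly between `|h x|` and `β x` and is strictly
increasing.
-/

open Set Filter Topology

section RunningMax

variable {α : Type*} [ConditionallyCompleteLinearOrder α]

noncomputable def runningMax (f : ℝ → α) (x : ℝ) : α := sSup (f '' Icc 0 x)

variable {f : ℝ → α}

theorem runningMax_eq_sSup_image_unitInterval {x : ℝ} (hx : 0 ≤ x) :
    runningMax f x = sSup ((fun s => f (s * x)) '' Icc 0 1) := by
  rw [runningMax, ← Function.comp_def, image_comp, image_mul_right_Icc zero_le_one hx, zero_mul,
    one_mul]

variable [TopologicalSpace α] [OrderTopology α] (hf : Continuous f)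
include hf

theorem continuousOn_runningMax : ContinuousOn (runningMax f) (Ici 0) := by
  have hcont : Continuous fun x : ℝ => sSup ((fun s => f (s * x)) '' Icc 0 1) :=
    isCompact_Icc.continuous_sSup (f := fun x s => f (s * x)) (by fun_prop)
  exact hcont.continuousOn.congr fun x hx => runningMax_eq_sSup_image_unitInterval hx

theorem le_runningMax {x : ℝ} (hx : 0 ≤ x) : f x ≤ runningMax f x :=
  le_csSup (isCompact_Icc.bddAbove_image hf.continuousOn) (mem_image_of_mem f ⟨hx, le_rfl⟩)

theorem monotoneOn_runningMax : MonotoneOn (runningMax f) (Ici 0) := fun _ hx _ _ hxy =>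
  csSup_le_csSup (isCompact_Icc.bddAbove_image hf.continuousOn) ((nonempty_Icc.2 hx).image f)
    (image_mono (Icc_subset_Icc le_rfl hxy))

theorem runningMax_lt_iff {x : ℝ} (hx : 0 ≤ x) (c : α) :
    runningMax f x < c ↔ ∀ t ∈ Icc 0 x, f t < c :=
  isCompact_Icc.sSup_lt_iff_of_continuous (nonempty_Icc.2 hx) hf.continuousOn c

end RunningMax

theorem eq_zero_of_abs_lt_mul_abs {h : ℝ → ℝ} (hcont : Continuous h) {β : ℝ}
    (hbound : ∀ x : ℝ, x ≠ 0 → |h x| < β * |x|) : h 0 = 0 := by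
  have hlim : Tendsto (fun x => β * |x| - |h x|) (𝓝[≠] 0) (𝓝 (β * |0| - |h 0|)) :=
    (by fun_prop : Continuous fun x => β * |x| - |h x|).continuousWithinAt
  have hnonneg : 0 ≤ β * |0| - |h 0| :=
    ge_of_tendsto hlim (eventually_nhdsWithin_of_forall fun x hx => sub_nonneg.2 (hbound x hx).le)
  simpa using hnonneg

theorem stmt_2 (h : ℝ → ℝ) (hcont : Continuous h) (β : ℝ) (hβ : 0 < β)
    (hbound : ∀ x : ℝ, x ≠ 0 → |h x| < β * |x|) :
    ∃ ht : ℝ → ℝ, ContinuousOn ht (Set.Ioi 0) ∧ StrictMonoOn ht (Set.Ioi 0) ∧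
      ∀ x : ℝ, 0 < x → |h x| < ht x ∧ ht x < β * x := by
  have habs : Continuous fun x => |h x| := hcont.abs
  set M := runningMax fun x => |h x|
  have hM_lt : ∀ x, 0 < x → M x < β * x := fun x hx =>
    (runningMax_lt_iff habs hx.le _).2 fun t ⟨ht₀, htx⟩ => by
      rcases ht₀.eq_or_lt with rfl | ht₀
      · simpa [eq_zero_of_abs_lt_mul_abs hcont hbound] using mul_pos hβ hx
      · calc |h t| < β * |t| := hbound t ht₀.ne'
          _ = β * t := by rw [abs_of_pos ht₀]
          _ ≤ β * x := by gcongr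
  refine ⟨fun x => (M x + β * x) / 2, ?_, ?_, fun x hx => ?_⟩
  · exact (((continuousOn_runningMax habs).mono Ioi_subset_Ici_self).add
      (by fun_prop)).div_const 2
  · intro x hx y hy hxy
    have hMxy : M x ≤ M y :=
      monotoneOn_runningMax habs (mem_Ici_of_Ioi hx) (mem_Ici_of_Ioi hy) hxy.le
    have : β * x < β * y := by gcongr
    dsimp only
    linarith
  · have := le_runningMax habs hx.le
    have := hM_lt x hx
    constructor <;> linarith
end

section
/- For b > 0, the inequality 2 − b² ≤ 2(b² − 1)·√(b² + 1) holds if and only if b ≥ √5/2. -/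
/-! Write `s = √(b² + 1)`, so that `b² = s² - 1`. The difference of the two sides is then the
cubic `2s³ + s² - 4s - 3 = (2s - 3)(s + 1)²`, whose sign is that of `2s - 3`; and `2s ≥ 3`
means `b² ≥ 5/4`. -/

open Real

theorem two_mul_sq_sub_one_mul_sqrt_sub (b : ℝ) :
    2 * (b ^ 2 - 1) * √(b ^ 2 + 1) - (2 - b ^ 2) =
      (2 * √(b ^ 2 + 1) - 3) * (√(b ^ 2 + 1) + 1) ^ 2 := by
  have hb : b ^ 2 = √(b ^ 2 + 1) ^ 2 - 1 := by rw [sq_sqrt (by positivity)]; ring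
  set s := √(b ^ 2 + 1)
  rw [hb]
  ring

theorem three_le_two_mul_sqrt_sq_add_one_iff {b : ℝ} (hb : 0 ≤ b) :
    3 ≤ 2 * √(b ^ 2 + 1) ↔ √5 ≤ 2 * b := by
  rw [← pow_le_pow_iff_left₀ (by norm_num) (by positivity) two_ne_zero,
    ← pow_le_pow_iff_left₀ (sqrt_nonneg 5) (by positivity) two_ne_zero,
    mul_pow, mul_pow, sq_sqrt (by positivity), sq_sqrt (by norm_num)]
  constructor <;> intro h <;> linarith

theorem stmt_13 (b : ℝ) (hb : 0 < b) :
    2 - b ^ 2 ≤ 2 * (b ^ 2 - 1) * Real.sqrt (b ^ 2 + 1) ↔ Real.sqrt 5 / 2 ≤ b := by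
  rw [← sub_nonneg, two_mul_sq_sub_one_mul_sqrt_sub,
    mul_nonneg_iff_of_pos_right (by positivity), sub_nonneg,
    three_le_two_mul_sqrt_sq_add_one_iff hb.le, div_le_iff₀ two_pos, mul_comm]
end

section
/- For b > 0, set ξ₀ = −1 + √(1+b²). Then the inequality 2(b²+1)ξ₀/(b² + ξ₀²)² ≤ 1 holds if and only if b ≥ √5/2. -/
/-! With s = √(1 + b²) we have ξ₀ = s - 1 and b² + ξ₀² = 2 s ξ₀, so the left-hand side collapses
to 1 / (2 ξ₀). The inequality thus says ξ₀ ≥ 1/2, i.e. 1 + b² ≥ 9/4, i.e. b ≥ √5 / 2. -/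

lemma one_lt_sqrt_one_add_sq {b : ℝ} (hb : b ≠ 0) : 1 < √(1 + b ^ 2) :=
  (Real.lt_sqrt zero_le_one).mpr (by simpa using pow_pos (abs_pos.mpr hb) 2)

lemma sq_add_sq_sub_one_eq {b s : ℝ} (hs : s ^ 2 = 1 + b ^ 2) :
    b ^ 2 + (s - 1) ^ 2 = 2 * s * (s - 1) := by
  linear_combination -hs

lemma hill_slope_eq_inv {b s : ℝ} (hs1 : 1 < s) (hs : s ^ 2 = 1 + b ^ 2) :
    2 * (b ^ 2 + 1) * (s - 1) / (b ^ 2 + (s - 1) ^ 2) ^ 2 = (2 * (s - 1))⁻¹ := by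
  have hs0 : s ≠ 0 := by positivity
  have hξ : s - 1 ≠ 0 := sub_ne_zero.mpr hs1.ne'
  rw [sq_add_sq_sub_one_eq hs, add_comm, ← hs]
  field_simp

lemma one_le_two_mul_sqrt_one_add_sq_sub_one_iff {b : ℝ} (hb : 0 ≤ b) :
    1 ≤ 2 * (√(1 + b ^ 2) - 1) ↔ √5 / 2 ≤ b :=
  calc 1 ≤ 2 * (√(1 + b ^ 2) - 1) ↔ 3 / 2 ≤ √(1 + b ^ 2) := by constructor <;> intro <;> linarith
    _ ↔ (3 / 2) ^ 2 ≤ 1 + b ^ 2 := Real.le_sqrt (by norm_num) (by positivity)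
    _ ↔ 5 ≤ (b * 2) ^ 2 := by constructor <;> intro <;> linarith
    _ ↔ √5 ≤ b * 2 := (Real.sqrt_le_left (by positivity)).symm
    _ ↔ √5 / 2 ≤ b := (div_le_iff₀ two_pos).symm

theorem stmt_14 (b : ℝ) (hb : 0 < b) (ξ₀ : ℝ) (hξ₀ : ξ₀ = Real.sqrt (1 + b ^ 2) - 1) :
    2 * (b ^ 2 + 1) * ξ₀ / (b ^ 2 + ξ₀ ^ 2) ^ 2 ≤ 1 ↔ Real.sqrt 5 / 2 ≤ b := by
  have hs1 := one_lt_sqrt_one_add_sq hb.ne'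
  rw [hξ₀, hill_slope_eq_inv hs1 (Real.sq_sqrt (by positivity)), inv_le_one₀ (by linarith),
    one_le_two_mul_sqrt_one_add_sq_sub_one_iff hb.le]
end

section
/- Consider the scalar delay differential equation ẋ(t) = b·x(t−τ)·(1 − x(t)) − c·x(t) with b, c > 0 and τ ≥ 0, and a continuous initial function φ : [−τ,0] → [0,1]. Then the solution satisfies 0 ≤ x(t) ≤ 1 for all t ≥ 0 (the set C([−τ,0],[0,1]) is invariant). -/
/-!
At a point where `x = 1` the equation gives `ẋ = -c < 0`, so `x` cannot cross `1` upwards.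
For the lower bound, `x` is compared with the barrier `-δ e^{K(s-t)}`: at the first contact the
delayed value `x(s-τ)` still lies above the barrier (or in the initial data, which is
nonnegative), so the right-hand side beats the barrier's slope once `K > b(1+δ)`.
Letting `δ → 0` gives `x ≥ 0`. Both are fencing arguments; the delay only needs the
version in which the inequality may be assumed up to the contact time.
-/

open Set Filter Topology

/-- `image_le_of_deriv_right_lt_deriv_boundary'`, where the boundary condition may also use
`f ≤ B` on `[a, x]`. -/
theorem image_le_of_deriv_right_lt_deriv_first_contact {f f' B B' : ℝ → ℝ} {a b : ℝ}
    (hf : ContinuousOn f (Icc a b)) (hf' : ∀ x ∈ Ico a b, HasDerivWithinAt f (f' x) (Ici x) x)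
    (ha : f a ≤ B a) (hB : ContinuousOn B (Icc a b))
    (hB' : ∀ x ∈ Ico a b, HasDerivWithinAt B (B' x) (Ici x) x)
    (bound : ∀ x ∈ Ico a b, (∀ y ∈ Icc a x, f y ≤ B y) → f x = B x → f' x < B' x) :
    ∀ ⦃x⦄, x ∈ Icc a b → f x ≤ B x := by
  change Icc a b ⊆ {x | f x ≤ B x}
  have hcont : ContinuousOn (fun x => (f x, B x)) (Icc a b) := hf.prodMk hB
  have hclosed : IsClosed ({x | f x ≤ B x} ∩ Icc a b) := by
    simp only [inter_comm]
    exact hcont.preimage_isClosed_of_isClosed isClosed_Icc OrderClosedTopology.isClosed_le'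
  refine hclosed.Icc_subset_of_forall_mem_nhdsGT_of_Icc_subset ha fun x hx hle => ?_
  rcases (show f x ≤ B x from hle ⟨hx.1, le_rfl⟩).lt_or_eq with hlt | heq
  · have : ∀ᶠ y in 𝓝[Icc a b] x, f y < B y :=
      hcont x (Ico_subset_Icc_self hx) (isOpen_lt continuous_fst continuous_snd |>.mem_nhds hlt)
    have : ∀ᶠ y in 𝓝[>] x, f y < B y := nhdsWithin_le_of_mem (Icc_mem_nhdsGT_of_mem hx) this
    exact this.mono fun _ => le_of_lt
  · have hgap : HasDerivWithinAt (fun y => B y - f y) (B' x - f' x) (Ioi x) x :=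
      ((hB' x hx).sub (hf' x hx)).Ioi_of_Ici
    have hslope : ∀ᶠ y in 𝓝[>] x, 0 < slope (fun y => B y - f y) x y :=
      (hasDerivWithinAt_iff_tendsto_slope' (lt_irrefl x)).1 hgap
        (Ioi_mem_nhds (sub_pos.2 (bound x hx hle heq)))
    filter_upwards [hslope, self_mem_nhdsWithin] with y hy hxy
    rw [slope_def_field, heq, sub_self, sub_zero] at hy
    have := (div_pos_iff_of_pos_right (sub_pos.2 hxy)).1 hy
    exact (sub_pos.1 this).le

def IsCookeSolution (b c τ : ℝ) (x : ℝ → ℝ) : Prop :=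
  ∀ t : ℝ, 0 ≤ t → HasDerivAt x (b * x (t - τ) * (1 - x t) - c * x t) t

namespace IsCookeSolution
variable {b c τ : ℝ} {x : ℝ → ℝ}

theorem le_one (hc : 0 < c) (hx : IsCookeSolution b c τ x) (hcont : Continuous x)
    (h0 : x 0 ≤ 1) {t : ℝ} (ht : 0 ≤ t) : x t ≤ 1 :=
  image_le_of_deriv_right_lt_deriv_boundary (B := fun _ => 1) (B' := fun _ => 0)
    hcont.continuousOn (fun s hs => (hx s hs.1).hasDerivWithinAt) h0
    (fun _ => hasDerivAt_const _ _) (fun s _ hs => by simpa [hs] using hc) ⟨ht, le_rfl⟩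

theorem neg_le (hb : 0 ≤ b) (hc : 0 ≤ c) (hτ : 0 ≤ τ) (hx : IsCookeSolution b c τ x)
    (hcont : Continuous x) (hinit : ∀ s, -τ ≤ s → s ≤ 0 → 0 ≤ x s)
    {t δ : ℝ} (ht : 0 ≤ t) (hδ : 0 < δ) : -δ ≤ x t := by
  set K := b * (1 + δ) + 1
  set β : ℝ → ℝ := fun s => -δ * Real.exp (K * (s - t))
  have hK : 0 ≤ K := by positivity
  have hβ' (s : ℝ) : HasDerivAt β (K * β s) s := by
    have := ((((hasDerivAt_id s).sub_const t).const_mul K).exp).const_mul (-δ)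
    exact this.congr_deriv (by simp only [β, id, mul_one]; ring)
  have hβ_neg (s : ℝ) : β s < 0 := by simp only [β]; nlinarith [Real.exp_pos (K * (s - t))]
  have hβ_anti : Antitone β := fun s s' hss' =>
    mul_le_mul_of_nonpos_left (Real.exp_le_exp.2 (by gcongr)) (by linarith)
  have hβ_ge {s : ℝ} (hs : s ≤ t) : -δ ≤ β s := by
    have : Real.exp (K * (s - t)) ≤ 1 := Real.exp_le_one_iff.2 (by nlinarith)
    simp only [β]; nlinarith
  have hβt : β t = -δ := by simp [β]
  rw [← hβt]
  refine image_le_of_deriv_right_lt_deriv_first_contact (a := 0) (b := t)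
    (fun s _ => (hβ' s).continuousAt.continuousWithinAt) (fun s _ => (hβ' s).hasDerivWithinAt)
    ((hβ_neg 0).le.trans (hinit 0 (by linarith) le_rfl)) hcont.continuousOn
    (fun s hs => (hx s hs.1).hasDerivWithinAt) (fun s hs hhist hcontact => ?_) ⟨ht, le_rfl⟩
  have hdelay : β s ≤ x (s - τ) := by
    rcases le_total 0 (s - τ) with hsτ | hsτ
    · exact (hβ_anti (by linarith)).trans (hhist _ ⟨hsτ, by linarith⟩)
    · exact (hβ_neg s).le.trans (hinit _ (by linarith [hs.1]) hsτ)
  rw [← hcontact]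
  have := hβ_ge hs.2.le
  have := hβ_neg s
  nlinarith [mul_nonneg (mul_nonneg hb (sub_nonneg.2 hdelay)) (by linarith : (0:ℝ) ≤ 1 - β s),
    mul_nonneg hb (mul_nonneg (by linarith : (0:ℝ) ≤ -β s) (by linarith : 0 ≤ δ + β s)),
    mul_nonneg hc (by linarith : (0:ℝ) ≤ -β s)]

theorem nonneg (hb : 0 ≤ b) (hc : 0 ≤ c) (hτ : 0 ≤ τ) (hx : IsCookeSolution b c τ x)
    (hcont : Continuous x) (hinit : ∀ s, -τ ≤ s → s ≤ 0 → 0 ≤ x s) {t : ℝ} (ht : 0 ≤ t) :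
    0 ≤ x t :=
  le_of_forall_pos_le_add fun _ hδ => by linarith [hx.neg_le hb hc hτ hcont hinit ht hδ]

end IsCookeSolution

theorem stmt_19 (b c τ : ℝ) (hb : 0 < b) (hc : 0 < c) (hτ : 0 ≤ τ)
    (x : ℝ → ℝ) (hcont : Continuous x)
    (hode : ∀ t : ℝ, 0 ≤ t →
      HasDerivAt x (b * x (t - τ) * (1 - x t) - c * x t) t)
    (hinit : ∀ s : ℝ, -τ ≤ s → s ≤ 0 → x s ∈ Set.Icc (0 : ℝ) 1) :
    ∀ t : ℝ, 0 ≤ t → x t ∈ Set.Icc (0 : ℝ) 1 := by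
  have hx : IsCookeSolution b c τ x := hode
  intro t ht
  exact ⟨hx.nonneg hb.le hc.le hτ hcont (fun s h₁ h₂ => (hinit s h₁ h₂).1) ht,
    hx.le_one hc hcont (hinit 0 (by linarith) le_rfl).2 ht⟩
end
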